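/- arXiv:1810.10954 — 3 statements merged into one kernel-verified Lean document; each statement's English description precedes it below -/
import Mathlib

section
/- Let A(θ) be the 4×4 matrix with rows (0, 4/(3θ), 0, 0), (0, 1/3, 4/(3θ), 0), (0, 0, 2/3, 4/(3θ)), (4/θ, 0, 0, 1), and let D = θ∂_θ + A(θ) act on (ℂ(θ))^4, i.e., D(m) = θ m' + A(θ)m. Then the cyclic vector m = (1,0,0,0)^t satisfies D^4 m + 4 D^3 m + (32/9) D^2 m - (256/(27θ^4)) m = 0. -/
/-!
On `θ ≠ 0` the iterates `D^k m` for `k ≤ 4` are explicit Laurent vectors, because the Euler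
operator `θ ∂_θ` multiplies `θ^(-n)` by `-n`. Since `D` is a local operator, these closed forms,
which only hold off `θ = 0`, can be fed back into `D`; the relation is then a comparison of
coefficients of `θ^(-2)`, `θ^(-3)` and `θ^(-4)`.
-/

open Matrix

/-- The connection matrix of the localized Fourier–Laplace transform of the Gauß–Manin system. -/
noncomputable def gmMatrix (θ : ℂ) : Matrix (Fin 4) (Fin 4) ℂ :=
  !![0, 4 / (3 * θ), 0, 0;
     0, 1 / 3, 4 / (3 * θ), 0;
     0, 0, 2 / 3, 4 / (3 * θ);
     4 / θ, 0, 0, 1]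

/-- The operator `D = θ∂_θ + A(θ)` acting on vector-valued functions. -/
noncomputable def Dop (v : ℂ → Fin 4 → ℂ) : ℂ → Fin 4 → ℂ :=
  fun θ => θ • (fun i => deriv (fun t => v t i) θ) + (gmMatrix θ).mulVec (v θ)

open Filter Topology Set

theorem Dop_congr_of_eventuallyEq {f g : ℂ → Fin 4 → ℂ} {θ : ℂ} (h : f =ᶠ[𝓝 θ] g) :
    Dop f θ = Dop g θ := by
  have hderiv (i : Fin 4) : deriv (fun t => f t i) θ = deriv (fun t => g t i) θ :=
    EventuallyEq.deriv_eq (h.mono fun _ ht => congrFun ht i)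
  simp only [Dop, hderiv, h.eq_of_nhds]

theorem eqOn_Dop {f g : ℂ → Fin 4 → ℂ} {s : Set ℂ} (hs : IsOpen s) (h : EqOn f g s) :
    EqOn (Dop f) (Dop g) s := fun _ hθ =>
  Dop_congr_of_eventuallyEq (eventuallyEq_of_mem (hs.mem_nhds hθ) h)

theorem mul_deriv_const_div_pow (c : ℂ) (n : ℕ) {θ : ℂ} (hθ : θ ≠ 0) :
    θ * deriv (fun t => c / t ^ n) θ = -n * (c / θ ^ n) := by
  have hzpow : (fun t : ℂ => c / t ^ n) = fun t => c * t ^ (-n : ℤ) := by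
    funext t; rw [_root_.zpow_neg, zpow_natCast, div_eq_mul_inv]
  rw [hzpow, deriv_const_mul _ (differentiableAt_zpow.2 (Or.inl hθ)), deriv_zpow,
    zpow_sub_one₀ hθ, _root_.zpow_neg, zpow_natCast]
  push_cast
  field_simp

noncomputable def cyclicIterate : ℕ → ℂ → Fin 4 → ℂ
  | 0 => fun _ => ![1, 0, 0, 0]
  | 1 => fun θ => ![0, 0, 0, 4 / θ]
  | 2 => fun θ => ![0, 0, (16 / 3) / θ ^ 2, 0]
  | 3 => fun θ => ![0, (64 / 9) / θ ^ 3, (-64 / 9) / θ ^ 2, 0]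
  | 4 => fun θ => ![(256 / 27) / θ ^ 4, (-256 / 9) / θ ^ 3, (256 / 27) / θ ^ 2, 0]
  | _ => 0

theorem Dop_cyclicIterate {k : ℕ} (hk : k < 4) {θ : ℂ} (hθ : θ ≠ 0) :
    Dop (cyclicIterate k) θ = cyclicIterate (k + 1) θ := by
  ext i
  interval_cases k <;> fin_cases i <;>
    simp [Dop, cyclicIterate, gmMatrix, mul_deriv_const_div_pow _ _ hθ] <;>
    field_simp <;> ring

theorem eqOn_iterate_Dop_cyclicIterate {k : ℕ} (hk : k ≤ 4) :
    EqOn (Dop^[k] (cyclicIterate 0)) (cyclicIterate k) {0}ᶜ := by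
  induction k with
  | zero => exact eqOn_refl _ _
  | succ k ih =>
    rw [Function.iterate_succ_apply']
    exact (eqOn_Dop isOpen_compl_singleton (ih (by omega))).trans
      fun θ hθ => Dop_cyclicIterate (by omega) hθ

/-- The cyclic vector `m = (1,0,0,0)ᵗ` satisfies
`D⁴m + 4D³m + (32/9)D²m - (256/(27θ⁴))m = 0`. -/
theorem cyclic_vector_relation :
    ∀ θ : ℂ, θ ≠ 0 →
      (Dop^[4] (fun _ => ![1, 0, 0, 0])) θ
        + (4 : ℂ) • (Dop^[3] (fun _ => ![1, 0, 0, 0])) θ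
        + ((32 : ℂ) / 9) • (Dop^[2] (fun _ => ![1, 0, 0, 0])) θ
        - ((256 : ℂ) / (27 * θ ^ 4)) • (![1, 0, 0, 0] : Fin 4 → ℂ) = 0 := by
  intro θ hθ
  have hiterate (k : ℕ) (hk : k ≤ 4) : Dop^[k] (fun _ => ![1, 0, 0, 0]) θ = cyclicIterate k θ :=
    eqOn_iterate_Dop_cyclicIterate hk hθ
  rw [hiterate 4 le_rfl, hiterate 3 (by norm_num), hiterate 2 (by norm_num)]
  ext i
  fin_cases i <;> simp [cyclicIterate] <;> field_simp <;> ring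
end

section
/- In the quotient ring H = ℂ[x,y]/⟨xy, x - 3y^3⟩, the images of 1, y, y^2, y^3 form a ℂ-basis; in particular H has dimension 4 over ℂ. -/
/-!
Substituting `x = c yⁿ` eliminates `x`, and the relation `xy = 0` becomes `c yⁿ⁺¹ = 0`, i.e.
`yⁿ⁺¹ = 0` when `c` is a unit. Hence `R[x, y] ⧸ ⟨xy, x - c yⁿ⟩ ≃ R[y] ⧸ ⟨yⁿ⁺¹⟩`, which has the power
basis `1, y, …, yⁿ`; the theorem is the case `R = ℂ`, `c = n = 3`.
-/

open MvPolynomial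

noncomputable section

theorem AdjoinRoot.root_X_pow_pow_eq_zero (R : Type*) [CommRing R] (m : ℕ) :
    root (Polynomial.X ^ m : Polynomial R) ^ m = 0 := by
  rw [← mk_X, ← map_pow, mk_self]

namespace MvPolynomial

variable {R : Type*} [CommRing R] (c : R) (n : ℕ)

def orbifoldIdeal : Ideal (MvPolynomial (Fin 2) R) :=
  Ideal.span {X 0 * X 1, X 0 - C c * X 1 ^ n}

local notation "Q" => MvPolynomial (Fin 2) R ⧸ orbifoldIdeal c n
local notation "A" => AdjoinRoot (Polynomial.X ^ (n + 1) : Polynomial R)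

theorem X_one_pow_succ_mem_orbifoldIdeal {c : R} (hc : IsUnit c) :
    X 1 ^ (n + 1) ∈ orbifoldIdeal c n := by
  have hxy : X 0 * X 1 ∈ orbifoldIdeal c n := Ideal.subset_span (by simp)
  have hx : X 0 - C c * X 1 ^ n ∈ orbifoldIdeal c n := Ideal.subset_span (by simp)
  have hu : C (↑hc.unit⁻¹ : R) * C c = (1 : MvPolynomial (Fin 2) R) := by
    rw [← C_mul, hc.val_inv_mul, C_1]
  -- `c yⁿ⁺¹ = xy - y (x - c yⁿ)`
  have key : (X 1 : MvPolynomial (Fin 2) R) ^ (n + 1) =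
      C (↑hc.unit⁻¹ : R) * (X 0 * X 1 - X 1 * (X 0 - C c * X 1 ^ n)) := by
    linear_combination -(X 1 : MvPolynomial (Fin 2) R) ^ (n + 1) * hu
  rw [key]
  exact Ideal.mul_mem_left _ _ (Ideal.sub_mem _ hxy (Ideal.mul_mem_left _ _ hx))

theorem mk_X_zero_eq_algebraMap_mul_mk_X_one_pow :
    Ideal.Quotient.mk (orbifoldIdeal c n) (X 0) =
      algebraMap R Q c * Ideal.Quotient.mk _ (X 1) ^ n := by
  rw [← Ideal.Quotient.mk_algebraMap, algebraMap_eq, ← map_pow, ← map_mul,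
    Ideal.Quotient.mk_eq_mk_iff_sub_mem]
  exact Ideal.subset_span (by simp)

def toAdjoinRoot : MvPolynomial (Fin 2) R →ₐ[R] A :=
  aeval ![algebraMap R A c * AdjoinRoot.root _ ^ n, AdjoinRoot.root _]

@[simp]
theorem toAdjoinRoot_X_one : toAdjoinRoot c n (X 1) = AdjoinRoot.root _ := by
  simp [toAdjoinRoot]

theorem orbifoldIdeal_le_ker_toAdjoinRoot :
    orbifoldIdeal c n ≤ RingHom.ker (toAdjoinRoot c n) := by
  rw [orbifoldIdeal, Ideal.span_le]
  rintro p (rfl | rfl) <;>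
    simp [toAdjoinRoot, mul_assoc, ← pow_succ, AdjoinRoot.root_X_pow_pow_eq_zero]

def orbifoldQuotientToAdjoinRoot : Q →ₐ[R] A :=
  Ideal.Quotient.liftₐ _ (toAdjoinRoot c n) fun _ h ↦ orbifoldIdeal_le_ker_toAdjoinRoot c n h

@[simp]
theorem orbifoldQuotientToAdjoinRoot_mk (p : MvPolynomial (Fin 2) R) :
    orbifoldQuotientToAdjoinRoot c n (Ideal.Quotient.mk _ p) = toAdjoinRoot c n p :=
  rfl

variable {c}

def adjoinRootToOrbifoldQuotient (hc : IsUnit c) : A →ₐ[R] Q :=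
  AdjoinRoot.liftAlgHom _ (Algebra.ofId R Q) (Ideal.Quotient.mk _ (X 1)) (by
    simpa [← map_pow, Ideal.Quotient.eq_zero_iff_mem] using
      X_one_pow_succ_mem_orbifoldIdeal n hc)

@[simp]
theorem adjoinRootToOrbifoldQuotient_root (hc : IsUnit c) :
    adjoinRootToOrbifoldQuotient n hc (AdjoinRoot.root _) = Ideal.Quotient.mk _ (X 1) :=
  AdjoinRoot.liftAlgHom_root ..

def orbifoldQuotientEquiv (hc : IsUnit c) : Q ≃ₐ[R] A :=
  AlgEquiv.ofAlgHom (orbifoldQuotientToAdjoinRoot c n) (adjoinRootToOrbifoldQuotient n hc)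
    (AdjoinRoot.algHom_ext (by simp))
    (by
      refine Ideal.Quotient.algHom_ext _ (MvPolynomial.algHom_ext fun i ↦ ?_)
      fin_cases i
      · simp [toAdjoinRoot, -AdjoinRoot.algebraMap_eq, mk_X_zero_eq_algebraMap_mul_mk_X_one_pow]
      · simp)

def orbifoldQuotientPowerBasis (hc : IsUnit c) : PowerBasis R Q :=
  (AdjoinRoot.powerBasis' (Polynomial.monic_X_pow (n + 1))).map (orbifoldQuotientEquiv n hc).symm

@[simp]
theorem orbifoldQuotientPowerBasis_gen (hc : IsUnit c) :
    (orbifoldQuotientPowerBasis n hc).gen = Ideal.Quotient.mk _ (X 1) :=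
  adjoinRootToOrbifoldQuotient_root n hc

theorem orbifoldQuotientPowerBasis_dim [Nontrivial R] (hc : IsUnit c) :
    (orbifoldQuotientPowerBasis n hc).dim = n + 1 :=
  Polynomial.natDegree_X_pow (n + 1)

end MvPolynomial

end

/-- In `H = ℂ[x,y]/⟨xy, x - 3y³⟩`, the images of `1, y, y², y³` form a `ℂ`-basis;
in particular `H` is 4-dimensional over `ℂ`. -/
theorem orbifold_cohomology_basis :
    let I : Ideal (MvPolynomial (Fin 2) ℂ) :=
      Ideal.span {X 0 * X 1, X 0 - 3 * (X 1) ^ 3}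
    (∃ B : Module.Basis (Fin 4) ℂ (MvPolynomial (Fin 2) ℂ ⧸ I),
      ∀ i : Fin 4, B i = Ideal.Quotient.mk I ((X 1) ^ (i : ℕ))) ∧
    Module.finrank ℂ (MvPolynomial (Fin 2) ℂ ⧸ I) = 4 := by
  intro I
  have hI : I = orbifoldIdeal (3 : ℂ) 3 := by simp [I, orbifoldIdeal, map_ofNat]
  have h3 : IsUnit (3 : ℂ) := isUnit_iff_ne_zero.mpr three_ne_zero
  rw [hI]
  set pb := orbifoldQuotientPowerBasis 3 h3
  have hdim : pb.dim = 4 := orbifoldQuotientPowerBasis_dim 3 h3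
  refine ⟨⟨pb.basis.reindex (finCongr hdim), fun i ↦ ?_⟩, pb.finrank.trans hdim⟩
  simp [pb]
end

section
/- Let M be the 4×4 matrix with rows (0, 4/3, 0, 0), (0, 0, 4/3, 0), (0, 0, 0, 4/3), (4, 0, 0, 0) (quantum multiplication by -K on ℙ(1,3)). Then M^4 = (256/27)·I, and the eigenvalues of M are exactly the four critical values ±4/27^{1/4}, ±4i/27^{1/4} of f(x) = x + x^{-3}. -/
set_option maxHeartbeats 1000000


open Matrix

/-- Quantum multiplication by `-K` on `ℙ(1,3)` satisfies `M⁴ = (256/27)·I` and its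
eigenvalues are exactly the four critical values of `f(x) = x + x⁻³`. -/
theorem quantum_multiplication_spectrum :
    let M : Matrix (Fin 4) (Fin 4) ℂ :=
      !![0, 4/3, 0, 0; 0, 0, 4/3, 0; 0, 0, 0, 4/3; 4, 0, 0, 0]
    M ^ 4 = ((256 : ℂ) / 27) • (1 : Matrix (Fin 4) (Fin 4) ℂ) ∧
    spectrum ℂ M =
      {4 / (((27 : ℝ) ^ ((1 : ℝ) / 4) : ℝ) : ℂ),
       -(4 / (((27 : ℝ) ^ ((1 : ℝ) / 4) : ℝ) : ℂ)),
       Complex.I * (4 / (((27 : ℝ) ^ ((1 : ℝ) / 4) : ℝ) : ℂ)),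
       -(Complex.I * (4 / (((27 : ℝ) ^ ((1 : ℝ) / 4) : ℝ) : ℂ)))} := by
  intro M
  constructor
  · ext i j
    fin_cases i <;> fin_cases j <;>
      simp [M, pow_succ, Matrix.mul_apply, Fin.sum_univ_succ, Matrix.one_apply] <;> norm_num
  · set r : ℂ := (((27 : ℝ) ^ ((1 : ℝ) / 4) : ℝ) : ℂ) with hr
    set a : ℂ := 4 / r with ha
    have hrpos : (0 : ℝ) < (27 : ℝ) ^ ((1 : ℝ) / 4) :=
      Real.rpow_pos_of_pos (by norm_num) _
    have hr4 : r ^ 4 = 27 := by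
      rw [hr]
      norm_cast
      rw [← Real.rpow_natCast ((27 : ℝ) ^ ((1 : ℝ) / 4)) 4,
        ← Real.rpow_mul (by norm_num : (0:ℝ) ≤ 27)]
      norm_num
    have hr0 : r ≠ 0 := by
      rw [hr]
      exact_mod_cast ne_of_gt hrpos
    have ha4 : a ^ 4 = 256 / 27 := by
      rw [ha, div_pow, hr4]; norm_num
    ext μ
    have halg : algebraMap ℂ (Matrix (Fin 4) (Fin 4) ℂ) μ = μ • 1 := by
      simp [Algebra.algebraMap_eq_smul_one]
    have hdet : (μ • (1 : Matrix (Fin 4) (Fin 4) ℂ) - M).det = μ ^ 4 - 256 / 27 := by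
      have h : μ • (1 : Matrix (Fin 4) (Fin 4) ℂ) - M =
          !![μ, -(4/3), 0, 0; 0, μ, -(4/3), 0; 0, 0, μ, -(4/3); -4, 0, 0, μ] := by
        ext i j
        fin_cases i <;> fin_cases j <;>
          simp [M, Matrix.one_apply, Matrix.vecHead, Matrix.vecTail]
      rw [h]
      have h32 : Fin.succAbove (1 : Fin 4) 2 = 3 := by decide
      simp [Matrix.det_succ_row_zero, Fin.sum_univ_succ, h32]
      ring
    have hfac : μ ^ 4 - 256 / 27 = (μ - a) * (μ + a) * (μ - Complex.I * a) * (μ + Complex.I * a) := by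
      have hI : (Complex.I) ^ 2 = -1 := Complex.I_sq
      linear_combination ha4 + (a ^ 2 * μ ^ 2 - a ^ 4) * hI
    rw [spectrum.mem_iff, halg, Matrix.isUnit_iff_isUnit_det, hdet, isUnit_iff_ne_zero,
      not_ne_iff, hfac]
    simp only [Set.mem_insert_iff, Set.mem_singleton_iff, mul_eq_zero, sub_eq_zero,
      add_eq_zero_iff_eq_neg]
    tauto
end
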